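/- arXiv:1111.6283 — 2 statements merged into one kernel-verified Lean document; each statement's English description precedes it below -/
import Mathlib

section
/- Let $p_t, p_u, q \geq 1$ and let $\omega_{ij} \in \mathbb{R}$ for $1 \leq i \leq p_t$, $1 \leq j \leq q$. Let $T$ be a random $(p_t + p_u) \times q$ real matrix whose entries are jointly independent, with $T_{ij}$ distributed as a real Gaussian with mean $\omega_{ij}$ and variance $1$ for $i \leq p_t$, and as a standard real Gaussian (mean $0$, variance $1$) for $i > p_t$. For $c \in \mathbb{R}$ and $x \geq 0$ let $F_c(x)$ denote the probability that $Z^2 \leq x$ where $Z$ is Gaussian with mean $c$ and variance $1$, and write $F(x) = F_0(x)$. Then the probability that $\max_{i > p_t,\, j} T_{ij}^2 < \max_{i \leq p_t,\, j} T_{ij}^2$ equals $\int_0^\infty p_u q\, F(x)^{p_u q - 1} \frac{e^{-x/2}}{\sqrt{2\pi x}} \Big(1 - \prod_{i=1}^{p_t} \prod_{j=1}^{q} F_{\omega_{ij}}(x)\Big)\, dx$, the integral being with respect to Lebesgue measure on $(0,\infty)$. -/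
/-!
Split `T` into the rows with means `ω` and the centred rows; the two blocks are independent.
With `M`, `W` the maxima of the squared entries of the two blocks, `M ≤ w` iff every squared
entry of the first block is at most `w`, so conditioning on `W` gives
`P(W < M) = E[1 - ∏ F_{ω_ij}(W)]`. The same product formula shows that `W` has CDF `F^{p_u q}`;
since `F(x) = ∫_{-√x}^{√x} φ` has derivative `e^{-x/2}/√(2πx)`, the law of `W` has density
`p_u q F^{p_u q - 1} e^{-x/2}/√(2πx)` on `(0, ∞)`.
-/

open MeasureTheory ProbabilityTheory Real Set

/-- `F_c` of the statement. -/
noncomputable def gaussianSqCDF (c x : ℝ) : ℝ := (gaussianReal c 1).real {y : ℝ | y ^ 2 ≤ x}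

noncomputable def chiSqOnePDF (x : ℝ) : ℝ := exp (-x / 2) / √(2 * π * x)

noncomputable def maxChiSqPDF (n : ℕ) (x : ℝ) : ℝ :=
  n * gaussianSqCDF 0 x ^ (n - 1) * chiSqOnePDF x

lemma gaussianSqCDF_nonneg (c x : ℝ) : 0 ≤ gaussianSqCDF c x := measureReal_nonneg

lemma gaussianSqCDF_le_one (c x : ℝ) : gaussianSqCDF c x ≤ 1 := measureReal_le_one

lemma monotone_gaussianSqCDF (c : ℝ) : Monotone (gaussianSqCDF c) :=
  fun _ _ hab => measureReal_mono fun _ hy => le_trans hy hab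

lemma measurable_gaussianSqCDF (c : ℝ) : Measurable (gaussianSqCDF c) :=
  (monotone_gaussianSqCDF c).measurable

lemma gaussianSqCDF_of_neg {c x : ℝ} (hx : x < 0) : gaussianSqCDF c x = 0 := by
  have : {y : ℝ | y ^ 2 ≤ x} = ∅ :=
    eq_empty_of_forall_notMem fun y hy => (hx.trans_le (sq_nonneg y)).not_ge hy
  simp [gaussianSqCDF, this]

lemma gaussianSqCDF_eq_integral (c : ℝ) {x : ℝ} (hx : 0 ≤ x) :
    gaussianSqCDF c x = ∫ t in -√x..√x, gaussianPDFReal c 1 t := by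
  have hset : {y : ℝ | y ^ 2 ≤ x} = Icc (-√x) √x := by
    ext y; simpa using Real.sq_le hx
  rw [gaussianSqCDF, hset, measureReal_def, gaussianReal_apply_eq_integral c one_ne_zero,
    ENNReal.toReal_ofReal (setIntegral_nonneg measurableSet_Icc
      fun t _ => gaussianPDFReal_nonneg _ _ _),
    intervalIntegral.integral_of_le (by linarith [sqrt_nonneg x]), integral_Icc_eq_integral_Ioc]

lemma gaussianSqCDF_zero_right (c : ℝ) : gaussianSqCDF c 0 = 0 := by
  simp [gaussianSqCDF_eq_integral c le_rfl]

lemma continuous_gaussianPDFReal (c : ℝ) : Continuous (gaussianPDFReal c 1) := by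
  rw [gaussianPDFReal_def]; fun_prop

lemma gaussianSqCDF_eq_sub (c : ℝ) {x : ℝ} (hx : 0 ≤ x) :
    gaussianSqCDF c x =
      (∫ t in 0..√x, gaussianPDFReal c 1 t) - ∫ t in 0..-√x, gaussianPDFReal c 1 t := by
  rw [gaussianSqCDF_eq_integral c hx, intervalIntegral.integral_interval_sub_left
    ((continuous_gaussianPDFReal c).intervalIntegrable _ _)
    ((continuous_gaussianPDFReal c).intervalIntegrable _ _)]

lemma continuousOn_gaussianSqCDF (c : ℝ) : ContinuousOn (gaussianSqCDF c) (Ici 0) := by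
  have hΦ := intervalIntegral.differentiable_integral_of_continuous (a := 0)
    (continuous_gaussianPDFReal c) |>.continuous
  exact ((hΦ.comp continuous_sqrt).sub (hΦ.comp continuous_sqrt.neg)).continuousOn.congr
    fun x hx => gaussianSqCDF_eq_sub c hx

lemma hasDerivAt_gaussianSqCDF_zero {x : ℝ} (hx : 0 < x) :
    HasDerivAt (gaussianSqCDF 0) (chiSqOnePDF x) x := by
  have hφ := continuous_gaussianPDFReal 0
  have hsqrt := hasDerivAt_sqrt hx.ne'
  have h := ((hφ.integral_hasStrictDerivAt 0 (√x)).hasDerivAt.comp x hsqrt).sub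
    ((hφ.integral_hasStrictDerivAt 0 (-√x)).hasDerivAt.comp x hsqrt.neg)
  have hF : gaussianSqCDF 0 =ᶠ[nhds x]
      fun y => (∫ t in 0..√y, gaussianPDFReal 0 1 t) - ∫ t in 0..-√y, gaussianPDFReal 0 1 t :=
    (eventually_ge_nhds hx).mono fun y hy => gaussianSqCDF_eq_sub 0 hy
  refine (h.congr_deriv ?_).congr_of_eventuallyEq hF
  simp only [gaussianPDFReal, chiSqOnePDF, sub_zero, neg_sq, sq_sqrt hx.le, sqrt_mul
    (by positivity : (0:ℝ) ≤ 2 * π) x]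
  field_simp
  norm_num
  ring

lemma chiSqOnePDF_nonneg (x : ℝ) : 0 ≤ chiSqOnePDF x := by
  unfold chiSqOnePDF; positivity

lemma measurable_chiSqOnePDF : Measurable chiSqOnePDF := by
  unfold chiSqOnePDF; fun_prop

lemma chiSqOnePDF_le_rpow {x : ℝ} (hx : 0 < x) : chiSqOnePDF x ≤ x ^ (-(1 / 2) : ℝ) := by
  have hs : 0 < √x := sqrt_pos.2 hx
  have hle : √x ≤ √(2 * π * x) := sqrt_le_sqrt (by nlinarith [pi_gt_three])
  calc chiSqOnePDF x ≤ 1 / √x := by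
        rw [chiSqOnePDF, div_le_div_iff₀ (hs.trans_le hle) hs, one_mul]
        exact (mul_le_of_le_one_left hs.le (exp_le_one_iff.2 (by linarith))).trans hle
    _ = x ^ (-(1 / 2) : ℝ) := by rw [rpow_neg hx.le, sqrt_eq_rpow, one_div]

lemma maxChiSqPDF_nonneg (n : ℕ) (x : ℝ) : 0 ≤ maxChiSqPDF n x := by
  have := gaussianSqCDF_nonneg 0 x
  have := chiSqOnePDF_nonneg x
  unfold maxChiSqPDF; positivity

lemma measurable_maxChiSqPDF (n : ℕ) : Measurable (maxChiSqPDF n) :=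
  (measurable_const.mul ((measurable_gaussianSqCDF 0).pow_const _)).mul measurable_chiSqOnePDF

lemma maxChiSqPDF_le_rpow (n : ℕ) {x : ℝ} (hx : 0 < x) :
    maxChiSqPDF n x ≤ n * x ^ (-(1 / 2) : ℝ) := by
  have hF : gaussianSqCDF 0 x ^ (n - 1) ≤ 1 :=
    pow_le_one₀ (gaussianSqCDF_nonneg 0 x) (gaussianSqCDF_le_one 0 x)
  calc maxChiSqPDF n x ≤ n * 1 * chiSqOnePDF x := by
        unfold maxChiSqPDF; gcongr; exact chiSqOnePDF_nonneg x
    _ ≤ n * x ^ (-(1 / 2) : ℝ) := by rw [mul_one]; gcongr; exact chiSqOnePDF_le_rpow hx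

lemma integrableOn_maxChiSqPDF (n : ℕ) {b : ℝ} (hb : 0 ≤ b) :
    IntegrableOn (maxChiSqPDF n) (Ioc 0 b) := by
  have hdom : IntegrableOn (fun x : ℝ => n * x ^ (-(1 / 2) : ℝ)) (Ioc 0 b) := by
    rw [← intervalIntegrable_iff_integrableOn_Ioc_of_le hb]
    exact (intervalIntegral.intervalIntegrable_rpow' (by norm_num)).const_mul _
  refine hdom.mono' (measurable_maxChiSqPDF n).aestronglyMeasurable ?_
  refine (ae_restrict_iff' measurableSet_Ioc).2 (.of_forall fun x hx => ?_)
  rw [Real.norm_of_nonneg (maxChiSqPDF_nonneg n x)]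
  exact maxChiSqPDF_le_rpow n hx.1

lemma setIntegral_maxChiSqPDF {n : ℕ} (hn : n ≠ 0) {b : ℝ} (hb : 0 ≤ b) :
    ∫ x in Ioc 0 b, maxChiSqPDF n x = gaussianSqCDF 0 b ^ n := by
  have hderiv : ∀ x ∈ Ioo 0 b, HasDerivAt (fun y => gaussianSqCDF 0 y ^ n) (maxChiSqPDF n x) x :=
    fun x hx => by
      simpa [maxChiSqPDF, mul_assoc] using (hasDerivAt_gaussianSqCDF_zero hx.1).fun_pow n
  rw [← intervalIntegral.integral_of_le hb, intervalIntegral.integral_eq_sub_of_hasDerivAt_of_le hb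
    (((continuousOn_gaussianSqCDF 0).mono Icc_subset_Ici_self).pow n) hderiv
    ((intervalIntegrable_iff_integrableOn_Ioc_of_le hb).2 (integrableOn_maxChiSqPDF n hb)),
    Pi.pow_apply, Pi.pow_apply, gaussianSqCDF_zero_right, zero_pow hn, sub_zero]

section Maximum

variable {ι : Type*} [Fintype ι]

lemma measurable_sup'_comp {X : Type*} [MeasurableSpace X]
    (h : (Finset.univ : Finset ι).Nonempty) {f : X → ℝ} (hf : Measurable f) :
    Measurable fun y : ι → X => Finset.univ.sup' h fun i => f (y i) := by
  convert Finset.measurable_sup' h (f := fun i (y : ι → X) => f (y i))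
    fun i _ => hf.comp (measurable_pi_apply i) using 1
  ext y
  simp [Finset.sup'_apply]

lemma map_sup'_comp_apply_Iic {X : Type*} [MeasurableSpace X] (μ : ι → Measure X)
    [∀ i, SigmaFinite (μ i)] (h : (Finset.univ : Finset ι).Nonempty) {f : X → ℝ}
    (hf : Measurable f) (b : ℝ) :
    (Measure.pi μ).map (fun y => Finset.univ.sup' h fun i => f (y i)) (Iic b) =
      ∏ i, μ i {t | f t ≤ b} := by
  rw [Measure.map_apply (measurable_sup'_comp h hf) measurableSet_Iic, ← Measure.pi_pi]
  congr 1
  ext y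
  simp [Finset.sup'_le_iff]

theorem map_sup'_sq_gaussianReal (h : (Finset.univ : Finset ι).Nonempty) :
    (Measure.pi fun _ : ι => gaussianReal 0 1).map
        (fun y => Finset.univ.sup' h fun i => y i ^ 2) =
      (volume.restrict (Ioi 0)).withDensity
        fun x => ENNReal.ofReal (maxChiSqPDF (Fintype.card ι) x) := by
  have hn : Fintype.card ι ≠ 0 := (Fintype.card_pos_iff.2 (Finset.univ_nonempty_iff.1 h)).ne'
  refine Measure.ext_of_Iic _ _ fun b => ?_
  rw [map_sup'_comp_apply_Iic _ h (continuous_pow 2).measurable,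
    withDensity_apply _ measurableSet_Iic, Measure.restrict_restrict measurableSet_Iic,
    Iic_inter_Ioi, Finset.prod_const, Finset.card_univ, ← ofReal_measureReal (measure_ne_top _ _),
    ← ENNReal.ofReal_pow measureReal_nonneg]
  change ENNReal.ofReal (gaussianSqCDF 0 b ^ _) = _
  rcases le_or_gt 0 b with hb | hb
  · rw [← ofReal_integral_eq_lintegral_ofReal (integrableOn_maxChiSqPDF _ hb)
      (.of_forall (maxChiSqPDF_nonneg _)), setIntegral_maxChiSqPDF hn hb]
  · rw [gaussianSqCDF_of_neg hb]
    simp [Ioc_eq_empty_of_le hb.le, hn]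

end Maximum

theorem measurePreserving_pi_sumProd {α β γ X : Type*} [Fintype α] [Fintype β] [Fintype γ]
    [MeasurableSpace X] (μ : (α ⊕ β) × γ → Measure X) [∀ k, SigmaFinite (μ k)] :
    MeasurePreserving
      (fun T : (α ⊕ β) × γ → X =>
        (fun ij : α × γ => T (.inl ij.1, ij.2), fun ij : β × γ => T (.inr ij.1, ij.2)))
      (Measure.pi μ)
      ((Measure.pi fun ij : α × γ => μ (.inl ij.1, ij.2)).prod
        (Measure.pi fun ij : β × γ => μ (.inr ij.1, ij.2))) := by
  let e := Equiv.sumProdDistrib α β γ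
  exact (measurePreserving_sumPiEquivProdPi fun k => μ (e.symm k)).comp
    ((measurePreserving_piCongrLeft μ e.symm).symm)

theorem measureReal_prod_setOf_snd_lt_fst (μ ν : Measure ℝ) [IsProbabilityMeasure μ]
    [IsProbabilityMeasure ν] :
    (μ.prod ν).real {p | p.2 < p.1} = ∫ w, (1 - μ.real (Iic w)) ∂ν := by
  have hslice : ∀ w, (fun x => (x, w)) ⁻¹' {p : ℝ × ℝ | p.2 < p.1} = (Iic w)ᶜ := fun w => by
    ext x; simp
  have hS : MeasurableSet {p : ℝ × ℝ | p.2 < p.1} := measurableSet_lt measurable_snd measurable_fst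
  rw [measureReal_def, Measure.prod_apply_symm hS,
    ← integral_toReal (measurable_measure_prodMk_right hS).aemeasurable
      (.of_forall fun _ => measure_lt_top _ _)]
  simp_rw [hslice, ← measureReal_def, probReal_compl_eq_one_sub measurableSet_Iic]

theorem statement1 (pt pu q : ℕ) (hpt : 1 ≤ pt) (hpu : 1 ≤ pu) (hq : 1 ≤ q)
    (ω : Fin pt → Fin q → ℝ) :
    ((Measure.pi fun x : (Fin pt ⊕ Fin pu) × Fin q =>
        gaussianReal (Sum.elim (fun i => ω i x.2) (fun _ => 0) x.1) 1)
      {T : (Fin pt ⊕ Fin pu) × Fin q → ℝ |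
        (Finset.univ : Finset (Fin pu × Fin q)).sup'
            ⟨(⟨0, hpu⟩, ⟨0, hq⟩), Finset.mem_univ _⟩
            (fun ij => T (Sum.inr ij.1, ij.2) ^ 2) <
          (Finset.univ : Finset (Fin pt × Fin q)).sup'
            ⟨(⟨0, hpt⟩, ⟨0, hq⟩), Finset.mem_univ _⟩
            (fun ij => T (Sum.inl ij.1, ij.2) ^ 2)}).toReal =
      ∫ x in Set.Ioi (0 : ℝ),
        (pu * q : ℝ) *
          ((gaussianReal 0 1 {y : ℝ | y ^ 2 ≤ x}).toReal) ^ (pu * q - 1) *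
          (Real.exp (-x / 2) / Real.sqrt (2 * Real.pi * x)) *
          (1 - ∏ i : Fin pt, ∏ j : Fin q,
            (gaussianReal (ω i j) 1 {y : ℝ | y ^ 2 ≤ x}).toReal) := by
  set ν := fun x : (Fin pt ⊕ Fin pu) × Fin q =>
    gaussianReal (Sum.elim (fun i => ω i x.2) (fun _ => 0) x.1) 1
  set μt := Measure.pi fun ij : Fin pt × Fin q => gaussianReal (ω ij.1 ij.2) 1
  set μu := Measure.pi fun _ : Fin pu × Fin q => gaussianReal 0 1
  set M := fun x : Fin pt × Fin q → ℝ =>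
    Finset.univ.sup' ⟨(⟨0, hpt⟩, ⟨0, hq⟩), Finset.mem_univ _⟩ fun ij => x ij ^ 2
  set W := fun y : Fin pu × Fin q → ℝ =>
    Finset.univ.sup' ⟨(⟨0, hpu⟩, ⟨0, hq⟩), Finset.mem_univ _⟩ fun ij => y ij ^ 2
  have hsq : Measurable fun t : ℝ => t ^ 2 := (continuous_pow 2).measurable
  have hM : Measurable M := measurable_sup'_comp _ hsq
  have hW : Measurable W := measurable_sup'_comp _ hsq
  have : IsProbabilityMeasure (μt.map M) := Measure.isProbabilityMeasure_map hM.aemeasurable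
  have : IsProbabilityMeasure (μu.map W) := Measure.isProbabilityMeasure_map hW.aemeasurable
  have hS : MeasurableSet {p : ℝ × ℝ | p.2 < p.1} := measurableSet_lt measurable_snd measurable_fst
  have hlawM (w : ℝ) : (μt.map M).real (Iic w) = ∏ i, ∏ j, gaussianSqCDF (ω i j) w := by
    rw [measureReal_def, show μt.map M (Iic w) = _ from map_sup'_comp_apply_Iic _ _ hsq w,
      ENNReal.toReal_prod, ← Fintype.prod_prod_type']
    rfl
  calc _ = (μt.prod μu).real (Prod.map M W ⁻¹' {p | p.2 < p.1}) :=
        (measurePreserving_pi_sumProd ν).measureReal_preimage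
          ((hM.prodMap hW) hS).nullMeasurableSet
    _ = ((μt.map M).prod (μu.map W)).real {p | p.2 < p.1} := by
        rw [Measure.map_prod_map _ _ hM hW, map_measureReal_apply (hM.prodMap hW) hS]
    _ = ∫ w, (1 - (μt.map M).real (Iic w)) ∂(μu.map W) := measureReal_prod_setOf_snd_lt_fst _ _
    _ = ∫ x in Ioi 0, maxChiSqPDF (pu * q) x * (1 - ∏ i, ∏ j, gaussianSqCDF (ω i j) x) := by
        rw [show μu.map W = _ from map_sup'_sq_gaussianReal _,
          integral_withDensity_eq_integral_toReal_smul (measurable_maxChiSqPDF _).ennreal_ofReal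
            (.of_forall fun _ => ENNReal.ofReal_lt_top)]
        simp_rw [hlawM, ENNReal.toReal_ofReal (maxChiSqPDF_nonneg _ _), smul_eq_mul,
          Fintype.card_prod, Fintype.card_fin]
    _ = _ := by
        simp only [maxChiSqPDF, Nat.cast_mul]
        rfl
end

section
/- For real numbers $0 \leq c \leq c'$ and every $x \geq 0$, letting $\nu_c$ denote the real Gaussian measure with mean $c$ and variance $1$, one has $\nu_{c'}\{y \in \mathbb{R} : y^2 \leq x\} \leq \nu_{c}\{y \in \mathbb{R} : y^2 \leq x\}$; that is, the cumulative distribution function of the noncentral chi-squared distribution with one degree of freedom is nonincreasing in the noncentrality parameter. -/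
/-!
Write `a = √x`. Translating by the mean, `ν_b [-a, a]` is the standard Gaussian mass of
`[-a - b, a - b]`, whose derivative in `b` is `φ (-a - b) - φ (a - b)` for the standard density
`φ`. For `b ≥ 0` the point `a - b` is at least as close to `0` as `-a - b`, and `φ` decreases
in `|u|`, so this derivative is nonpositive.
-/

open MeasureTheory ProbabilityTheory

open Set intervalIntegral

lemma setOf_sq_le_eq_Icc {x : ℝ} (hx : 0 ≤ x) : {y : ℝ | y ^ 2 ≤ x} = Icc (-√x) √x := by
  ext y
  exact Real.sq_le hx

lemma gaussianReal_Icc_eq_centered (μ : ℝ) (v : NNReal) (s t : ℝ) :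
    gaussianReal μ v (Icc s t) = gaussianReal 0 v (Icc (s - μ) (t - μ)) := by
  rw [← zero_add μ, ← gaussianReal_map_add_const, Measure.map_apply (by fun_prop) measurableSet_Icc]
  congr 1
  ext u
  simp [le_sub_iff_add_le]

lemma gaussianReal_Icc_eq_integral (μ : ℝ) {v : NNReal} (hv : v ≠ 0) {s t : ℝ} (hst : s ≤ t) :
    gaussianReal μ v (Icc s t) = ENNReal.ofReal (∫ u in s..t, gaussianPDFReal μ v u) := by
  rw [gaussianReal_apply_eq_integral μ hv, integral_Icc_eq_integral_Ioc, integral_of_le hst]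

lemma continuous_gaussianPDFReal_s8 (μ : ℝ) (v : NNReal) : Continuous (gaussianPDFReal μ v) := by
  rw [gaussianPDFReal_def]
  fun_prop

lemma gaussianPDFReal_zero_le_of_abs_le (v : NNReal) {u w : ℝ} (h : |u| ≤ |w|) :
    gaussianPDFReal 0 v w ≤ gaussianPDFReal 0 v u := by
  simp only [gaussianPDFReal_def, sub_zero]
  gcongr _ * Real.exp (-?_ / _)
  exact sq_le_sq.mpr h

lemma hasDerivAt_integral_symm_sub {φ : ℝ → ℝ} (hφ : Continuous φ) (a b : ℝ) :
    HasDerivAt (fun b ↦ ∫ u in (-a - b)..(a - b), φ u) (φ (-a - b) - φ (a - b)) b := by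
  have hprimitive (t : ℝ) : HasDerivAt (fun t ↦ ∫ u in (0 : ℝ)..t, φ u) (φ t) t :=
    (hφ.integral_hasStrictDerivAt 0 t).hasDerivAt
  have hsplit : (fun b ↦ ∫ u in (-a - b)..(a - b), φ u) =
      fun b ↦ (∫ u in (0 : ℝ)..(a - b), φ u) - ∫ u in (0 : ℝ)..(-a - b), φ u := by
    ext b
    rw [integral_interval_sub_left (hφ.intervalIntegrable _ _) (hφ.intervalIntegrable _ _)]
  rw [hsplit]
  exact (((hprimitive _).comp_const_sub a b).sub
    ((hprimitive _).comp_const_sub (-a) b)).congr_deriv (by ring)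

lemma antitoneOn_integral_symm_sub {φ : ℝ → ℝ} (hφ : Continuous φ)
    (hφ_abs : ∀ u w, |u| ≤ |w| → φ w ≤ φ u) {a : ℝ} (ha : 0 ≤ a) :
    AntitoneOn (fun b ↦ ∫ u in (-a - b)..(a - b), φ u) (Ici 0) := by
  have hderiv := hasDerivAt_integral_symm_sub hφ a
  refine antitoneOn_of_deriv_nonpos (convex_Ici 0)
    (fun b _ ↦ (hderiv b).continuousAt.continuousWithinAt)
    (fun b _ ↦ (hderiv b).differentiableAt.differentiableWithinAt) fun b hb ↦ ?_
  rw [interior_Ici, mem_Ioi] at hb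
  rw [(hderiv b).deriv, sub_nonpos]
  apply hφ_abs
  rw [show -a - b = -(a + b) by ring, abs_neg, abs_of_pos (show 0 < a + b by linarith)]
  exact abs_le.mpr ⟨by linarith, by linarith⟩

theorem statement8 (c c' : ℝ) (hc : 0 ≤ c) (hcc' : c ≤ c') (x : ℝ) (hx : 0 ≤ x) :
    gaussianReal c' 1 {y : ℝ | y ^ 2 ≤ x} ≤ gaussianReal c 1 {y : ℝ | y ^ 2 ≤ x} := by
  rw [setOf_sq_le_eq_Icc hx, gaussianReal_Icc_eq_centered c, gaussianReal_Icc_eq_centered c',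
    gaussianReal_Icc_eq_integral 0 one_ne_zero (by linarith [Real.sqrt_nonneg x]),
    gaussianReal_Icc_eq_integral 0 one_ne_zero (by linarith [Real.sqrt_nonneg x])]
  exact ENNReal.ofReal_le_ofReal <| antitoneOn_integral_symm_sub (continuous_gaussianPDFReal_s8 0 1)
    (fun _ _ ↦ gaussianPDFReal_zero_le_of_abs_le 1) (Real.sqrt_nonneg x) hc (hc.trans hcc') hcc'
end
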